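/- Let ℏ, m, g, E₀, N > 0, set κ = √(2mE₀)/ℏ, let x₁ ≠ x₂ ∈ ℝ³, and define u(y) = Σ_{i=1}^2 e^{−κ|y−x_i|}/|y−x_i| for y ∉ {x₁,x₂}. For each n ≥ 0 define ψₙ(y₁,…,yₙ) = cₙ ∏_{j=1}^n u(y_j) with cₙ = N (−gm)ⁿ / ((2πℏ²)ⁿ √(n!)). Then for every n ≥ 1, every j ∈ {1,…,n}, every i ∈ {1,2}, and every fixed (y₁,…,y_{j−1},y_{j+1},…,yₙ) with all y_k ∉ {x₁,x₂}, the interior–boundary condition holds at the source x_i: lim_{y_j→x_i} |y_j − x_i| ψₙ(y₁,…,yₙ) = −(mg/(2πℏ²√n)) ψ_{n−1}(y₁,…,y_{j−1},y_{j+1},…,yₙ). -/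
import Mathlib


open Real Complex Filter

/-- The sectors of the dressed ground state of the two-source van Hove-type IBC model:
`ψₙ(y₁,…,yₙ) = cₙ ∏ⱼ u(yⱼ)` with `u(y) = Σᵢ e^{−κ|y−xᵢ|}/|y−xᵢ|` and
`cₙ = N (−gm)ⁿ/((2πℏ²)ⁿ √n!)`. -/
noncomputable def twoSourceState (ℏ m g κ N : ℝ)
    (x₁ x₂ : EuclideanSpace ℝ (Fin 3)) (n : ℕ)
    (y : Fin n → EuclideanSpace ℝ (Fin 3)) : ℂ :=
  ((N * (-(g * m)) ^ n / ((2 * π * ℏ ^ 2) ^ n * Real.sqrt (Nat.factorial n)) *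
      ∏ j, (Real.exp (-(κ * ‖y j - x₁‖)) / ‖y j - x₁‖
              + Real.exp (-(κ * ‖y j - x₂‖)) / ‖y j - x₂‖) : ℝ) : ℂ)

/-- Auxiliary limit: at a source `a`, `‖z − a‖ · u(z) → 1` where `u` is the sum of the
two Yukawa-type terms centered at `a` and at another point `b ≠ a`. -/
lemma aux_lim (κ : ℝ) (a b : EuclideanSpace ℝ (Fin 3)) (hab : a ≠ b) :
    Tendsto (fun z : EuclideanSpace ℝ (Fin 3) =>
        ‖z - a‖ * (Real.exp (-(κ * ‖z - a‖)) / ‖z - a‖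
          + Real.exp (-(κ * ‖z - b‖)) / ‖z - b‖))
      (nhdsWithin a {a}ᶜ) (nhds 1) := by
  have hb : ‖a - b‖ ≠ 0 := by simpa [sub_eq_zero] using hab
  have c1 : ContinuousAt (fun z : EuclideanSpace ℝ (Fin 3) => ‖z - a‖) a :=
    (continuous_norm.comp (continuous_id.sub continuous_const)).continuousAt
  have c2 : ContinuousAt (fun z : EuclideanSpace ℝ (Fin 3) => ‖z - b‖) a :=
    (continuous_norm.comp (continuous_id.sub continuous_const)).continuousAt
  have h1 : Tendsto (fun z : EuclideanSpace ℝ (Fin 3) =>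
      Real.exp (-(κ * ‖z - a‖)) + ‖z - a‖ * (Real.exp (-(κ * ‖z - b‖)) / ‖z - b‖))
      (nhdsWithin a {a}ᶜ) (nhds 1) := by
    have hc : ContinuousAt (fun z : EuclideanSpace ℝ (Fin 3) =>
        Real.exp (-(κ * ‖z - a‖)) + ‖z - a‖ * (Real.exp (-(κ * ‖z - b‖)) / ‖z - b‖)) a :=
      (Real.continuous_exp.continuousAt.comp ((continuousAt_const.mul c1).neg)).add
        (c1.mul (((Real.continuous_exp.continuousAt.comp
          ((continuousAt_const.mul c2).neg))).div c2 hb))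
    have := (hc.continuousWithinAt (s := {a}ᶜ)).tendsto
    simpa [sub_self] using this
  refine h1.congr' ?_
  filter_upwards [self_mem_nhdsWithin] with z hz
  have hz' : ‖z - a‖ ≠ 0 := by simpa [sub_eq_zero] using hz
  field_simp

set_option maxHeartbeats 1000000 in
/-- **The two-source dressed state satisfies the interior–boundary condition at each
source.** With `κ = √(2mE₀)/ℏ` and two sources fixed at `x₁ ≠ x₂`, for every sector
with `n ≥ 1` particles (written here as `n+1`), every particle index `j`, each source
`xᵢ`, and every fixed configuration of the remaining particles away from the sources,
`lim_{y_j→xᵢ} |y_j − xᵢ| ψ_{n+1}(y₁,…,y_{n+1}) = −(mg/(2πℏ²√(n+1))) ψₙ(y withoutʲ)`. -/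
theorem twoSourceState_satisfies_IBC
    (ℏ m g E₀ N : ℝ) (hℏ : 0 < ℏ) (hm : 0 < m) (hg : 0 < g) (hE₀ : 0 < E₀) (hN : 0 < N)
    (κ : ℝ) (hκdef : κ = Real.sqrt (2 * m * E₀) / ℏ)
    (x₁ x₂ : EuclideanSpace ℝ (Fin 3)) (hx : x₁ ≠ x₂) :
    ∀ (n : ℕ) (j : Fin (n + 1)) (y : Fin (n + 1) → EuclideanSpace ℝ (Fin 3)),
      (∀ k, k ≠ j → y k ∉ ({x₁, x₂} : Set (EuclideanSpace ℝ (Fin 3)))) →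
      ∀ xi ∈ ({x₁, x₂} : Set (EuclideanSpace ℝ (Fin 3))),
      Filter.Tendsto
        (fun z : EuclideanSpace ℝ (Fin 3) =>
          (‖z - xi‖ : ℂ) * twoSourceState ℏ m g κ N x₁ x₂ (n + 1) (Function.update y j z))
        (nhdsWithin xi {xi}ᶜ)
        (nhds ((-(m * g / (2 * π * ℏ ^ 2 * Real.sqrt ((n : ℝ) + 1))) : ℝ) *
          twoSourceState ℏ m g κ N x₁ x₂ n (fun k => y (j.succAbove k)))) := by
  intro n j y hy xi hxi
  have hπ := Real.pi_pos
  -- abbreviations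
  let u : EuclideanSpace ℝ (Fin 3) → ℝ := fun z =>
    Real.exp (-(κ * ‖z - x₁‖)) / ‖z - x₁‖ + Real.exp (-(κ * ‖z - x₂‖)) / ‖z - x₂‖
  let P : ℝ := ∏ k : Fin n, u (y (j.succAbove k))
  let C : ℝ := N * (-(g * m)) ^ (n + 1) /
      ((2 * π * ℏ ^ 2) ^ (n + 1) * Real.sqrt (Nat.factorial (n + 1))) * P
  -- the limit of ‖z - xi‖ * u z is 1
  have hulim : Tendsto (fun z => ‖z - xi‖ * u z) (nhdsWithin xi {xi}ᶜ) (nhds 1) := by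
    rcases hxi with h | h
    · subst h
      exact aux_lim κ xi x₂ hx
    · simp only [Set.mem_singleton_iff] at h; subst h
      have := aux_lim κ xi x₁ (Ne.symm hx)
      simpa [u, add_comm] using this
  have hulimC : Tendsto (fun z : EuclideanSpace ℝ (Fin 3) => ((‖z - xi‖ * u z : ℝ) : ℂ))
      (nhdsWithin xi {xi}ᶜ) (nhds ((1 : ℝ) : ℂ)) :=
    (Complex.continuous_ofReal.tendsto (1 : ℝ)).comp hulim
  -- pointwise rewriting of the function
  have hfun : ∀ z : EuclideanSpace ℝ (Fin 3),
      (‖z - xi‖ : ℂ) * twoSourceState ℏ m g κ N x₁ x₂ (n + 1) (Function.update y j z)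
        = ((C : ℝ) : ℂ) * ((‖z - xi‖ * u z : ℝ) : ℂ) := by
    intro z
    have hprod : (∏ k : Fin (n + 1),
        (Real.exp (-(κ * ‖Function.update y j z k - x₁‖)) / ‖Function.update y j z k - x₁‖
          + Real.exp (-(κ * ‖Function.update y j z k - x₂‖)) / ‖Function.update y j z k - x₂‖))
        = u z * P := by
      rw [Fin.prod_univ_succAbove _ j, Function.update_self]
      congr 1
      refine Finset.prod_congr rfl fun k _ => ?_
      rw [Function.update_of_ne (Fin.succAbove_ne j k)]
    rw [twoSourceState, hprod, ← Complex.ofReal_mul, ← Complex.ofReal_mul]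
    congr 1
    show ‖z - xi‖ * (_ * (u z * P)) = C * (‖z - xi‖ * u z)
    simp only [C]
    ring
  -- the constant identity
  have hconst : ((C : ℝ) : ℂ)
      = ((-(m * g / (2 * π * ℏ ^ 2 * Real.sqrt ((n : ℝ) + 1))) : ℝ) : ℂ) *
        twoSourceState ℏ m g κ N x₁ x₂ n (fun k => y (j.succAbove k)) := by
    rw [twoSourceState, ← Complex.ofReal_mul]
    congr 1
    show C = -(m * g / (2 * π * ℏ ^ 2 * Real.sqrt ((n : ℝ) + 1))) *
      (N * (-(g * m)) ^ n / ((2 * π * ℏ ^ 2) ^ n * Real.sqrt (Nat.factorial n)) * P)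
    have hsq : Real.sqrt ((Nat.factorial (n + 1) : ℕ) : ℝ)
        = Real.sqrt ((n : ℝ) + 1) * Real.sqrt ((Nat.factorial n : ℕ) : ℝ) := by
      rw [Nat.factorial_succ]
      push_cast
      rw [Real.sqrt_mul (by positivity)]
    have hA : (2 * π * ℏ ^ 2 : ℝ) ≠ 0 := by positivity
    have hs1 : Real.sqrt ((n : ℝ) + 1) ≠ 0 := by positivity
    have hs2 : Real.sqrt ((Nat.factorial n : ℕ) : ℝ) ≠ 0 := by
      have : (0 : ℝ) < (Nat.factorial n : ℝ) := by exact_mod_cast Nat.factorial_pos n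
      positivity
    simp only [C, hsq, pow_succ]
    field_simp
  -- assemble
  have main : Tendsto
      (fun z : EuclideanSpace ℝ (Fin 3) =>
        (‖z - xi‖ : ℂ) * twoSourceState ℏ m g κ N x₁ x₂ (n + 1) (Function.update y j z))
      (nhdsWithin xi {xi}ᶜ) (nhds (((C : ℝ) : ℂ) * ((1 : ℝ) : ℂ))) :=
    (tendsto_const_nhds.mul hulimC).congr fun z => (hfun z).symm
  rw [hconst] at main
  simpa using main
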